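/- Let g = diag(a₁,...,a_n) ∈ SL_n(ℝ) with a₁ ≥ ... ≥ a_n > 0, and let H = [span(e₂,...,e_n)]. For r, ε ∈ (0,1], if a₂/a₁ ≤ ε, then the projective map [g] is (ε/r²)-Lipschitz on the set of points of ℙ^{n-1}(ℝ) at distance at least r from H. -/

import Mathlib

/-!
Write `g = diag(a)`. It multiplies each `2 × 2` minor `v_i w_j - v_j w_i` of `(v, w)` by
`a_i a_j ≤ a₁ a₂`, so `‖gv ∧ gw‖ ≤ a₁ a₂ ‖v ∧ w‖`, while `‖gv‖ ≥ a₁ |v₁|`. Hence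
`d([gv],[gw]) ≤ (a₂ ‖v‖ ‖w‖)/(a₁ |v₁| |w₁|) · d([v],[w])`. By Lagrange's identity the distance
from `[v]` to `H` is `|v₁|/‖v‖`, attained at the projection of `v` to `span(e₂,…,eₙ)`, so
`‖v‖/|v₁| ≤ 1/r` on the region considered, and `a₂/a₁ ≤ ε` finishes the proof.
Lean indexes the coordinates from `0`, so `v₁` is `v 0`.
-/

open scoped BigOperators

/-- The Euclidean norm on `ℝⁿ`. -/
noncomputable def eucNorm (n : ℕ) (v : Fin n → ℝ) : ℝ := Real.sqrt (∑ i, v i ^ 2)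

/-- The Euclidean norm of the wedge product `v ∧ w` in `Λ²ℝⁿ`. -/
noncomputable def wedgeNorm (n : ℕ) (v w : Fin n → ℝ) : ℝ :=
  Real.sqrt ((∑ i, ∑ j, (v i * w j - v j * w i) ^ 2) / 2)

/-- The standard metric on `ℙ^{n-1}(ℝ)`: `d([v],[w]) = ‖v ∧ w‖ / (‖v‖‖w‖)`. -/
noncomputable def projDist (n : ℕ) (v w : Fin n → ℝ) : ℝ :=
  wedgeNorm n v w / (eucNorm n v * eucNorm n w)

/-- The distance from a point `[v]` of `ℙ^{n-1}(ℝ)` to the projectivization of a set `H`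
of nonzero vectors. -/
noncomputable def projDistSet (n : ℕ) (v : Fin n → ℝ) (H : Set (Fin n → ℝ)) : ℝ :=
  sInf {d | ∃ w, w ≠ 0 ∧ w ∈ H ∧ d = projDist n v w}


open Finset Function

section ProjectiveDistance

variable {n : ℕ}

lemma eucNorm_sq (v : Fin n → ℝ) : eucNorm n v ^ 2 = ∑ i, v i ^ 2 :=
  Real.sq_sqrt (sum_nonneg fun _ _ => sq_nonneg _)

lemma eucNorm_nonneg (v : Fin n → ℝ) : 0 ≤ eucNorm n v := Real.sqrt_nonneg _

lemma wedgeNorm_nonneg (v w : Fin n → ℝ) : 0 ≤ wedgeNorm n v w := Real.sqrt_nonneg _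

lemma eucNorm_pos {v : Fin n → ℝ} (hv : v ≠ 0) : 0 < eucNorm n v := by
  obtain ⟨i, hi⟩ := Function.ne_iff.1 hv
  exact Real.sqrt_pos.2 <|
    sum_pos' (fun _ _ => sq_nonneg _) ⟨i, mem_univ i, sq_pos_of_ne_zero hi⟩

lemma abs_le_eucNorm (v : Fin n → ℝ) (i : Fin n) : |v i| ≤ eucNorm n v :=
  Real.abs_le_sqrt (single_le_sum (f := fun j => v j ^ 2) (fun _ _ => sq_nonneg _) (mem_univ i))

lemma wedgeNorm_sq (v w : Fin n → ℝ) :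
    wedgeNorm n v w ^ 2 = eucNorm n v ^ 2 * eucNorm n w ^ 2 - (∑ i, v i * w i) ^ 2 := by
  have hsum : ∑ i, ∑ j, (v i * w j - v j * w i) ^ 2
      = 2 * ((∑ i, v i ^ 2) * (∑ j, w j ^ 2) - (∑ i, v i * w i) ^ 2) := by
    calc ∑ i, ∑ j, (v i * w j - v j * w i) ^ 2
        = ∑ i, ∑ j, (v i ^ 2 * w j ^ 2 - (v i * w i) * (v j * w j))
          + ∑ i, ∑ j, (v j ^ 2 * w i ^ 2 - (v j * w j) * (v i * w i)) := by
          simp only [← sum_add_distrib]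
          exact sum_congr rfl fun i _ => sum_congr rfl fun j _ => by ring
      _ = 2 * ∑ i, ∑ j, (v i ^ 2 * w j ^ 2 - (v i * w i) * (v j * w j)) := by
          rw [sum_comm (f := fun i j => v j ^ 2 * w i ^ 2 - (v j * w j) * (v i * w i))]
          ring
      _ = _ := by simp only [sum_sub_distrib, ← sum_mul_sum, sq (∑ i, v i * w i)]
  rw [wedgeNorm, Real.sq_sqrt, hsum, eucNorm_sq, eucNorm_sq]
  · ring
  · exact div_nonneg (sum_nonneg fun _ _ => sum_nonneg fun _ _ => sq_nonneg _) zero_le_two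

lemma projDist_nonneg (v w : Fin n → ℝ) : 0 ≤ projDist n v w :=
  div_nonneg (wedgeNorm_nonneg v w) (mul_nonneg (eucNorm_nonneg v) (eucNorm_nonneg w))

lemma eucNorm_sq_eq_sq_add_update (v : Fin n → ℝ) (z : Fin n) :
    eucNorm n v ^ 2 = v z ^ 2 + eucNorm n (update v z 0) ^ 2 := by
  have hsplit : ∀ i, v i ^ 2 = (if i = z then v z ^ 2 else 0) + update v z 0 i ^ 2 := by
    intro i
    by_cases hi : i = z
    · subst hi; simp
    · simp [hi]
  rw [eucNorm_sq, eucNorm_sq, sum_congr rfl fun i _ => hsplit i, sum_add_distrib, sum_ite_eq']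
  simp

lemma wedgeNorm_update_zero (v : Fin n → ℝ) (z : Fin n) :
    wedgeNorm n v (update v z 0) = |v z| * eucNorm n (update v z 0) := by
  have hinner : ∑ i, v i * update v z 0 i = eucNorm n (update v z 0) ^ 2 := by
    rw [eucNorm_sq]
    refine sum_congr rfl fun i _ => ?_
    by_cases hi : i = z
    · subst hi; simp
    · simp [hi, sq]
  refine (sq_eq_sq₀ (wedgeNorm_nonneg _ _) (mul_nonneg (abs_nonneg _) (eucNorm_nonneg _))).1 ?_
  rw [wedgeNorm_sq, hinner, eucNorm_sq_eq_sq_add_update v z, mul_pow, sq_abs]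
  ring

lemma projDist_update_zero {v : Fin n → ℝ} (z : Fin n) (hw : update v z 0 ≠ 0) :
    projDist n v (update v z 0) = |v z| / eucNorm n v := by
  rw [projDist, wedgeNorm_update_zero, mul_comm (eucNorm n v), mul_comm |v z|,
    mul_div_mul_left _ _ (eucNorm_pos hw).ne']

lemma mul_eucNorm_le_abs_of_le_projDistSet {v : Fin n → ℝ} (hv : v ≠ 0) {z : Fin n} {r : ℝ}
    (hr : r ≤ 1) (h : r ≤ projDistSet n v {x | x z = 0}) : r * eucNorm n v ≤ |v z| := by
  by_cases hw : update v z 0 = 0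
  · have hnorm : eucNorm n v = |v z| := by
      have := eucNorm_sq_eq_sq_add_update v z
      rw [hw, show eucNorm n 0 = 0 by simp [eucNorm], ← sq_abs (v z)] at this
      exact (sq_eq_sq₀ (eucNorm_nonneg v) (abs_nonneg _)).1 (by simpa using this)
    rw [hnorm]
    exact mul_le_of_le_one_left (abs_nonneg _) hr
  · have hbdd : BddBelow {d | ∃ u, u ≠ 0 ∧ u ∈ {x : Fin n → ℝ | x z = 0} ∧ d = projDist n v u} :=
      ⟨0, by rintro d ⟨u, -, -, rfl⟩; exact projDist_nonneg v u⟩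
    have hle : projDistSet n v {x | x z = 0} ≤ |v z| / eucNorm n v := by
      rw [← projDist_update_zero z hw]
      exact csInf_le hbdd ⟨update v z 0, hw, by simp, rfl⟩
    exact (le_div_iff₀ (eucNorm_pos hv)).1 (h.trans hle)

end ProjectiveDistance

section DiagonalAction

variable {n : ℕ} {a : Fin n → ℝ}

lemma wedgeNorm_mul_le {c : ℝ} (hc : 0 ≤ c) (ha : ∀ i j, i ≠ j → |a i * a j| ≤ c)
    (v w : Fin n → ℝ) :
    wedgeNorm n (fun i => a i * v i) (fun i => a i * w i) ≤ c * wedgeNorm n v w := by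
  rw [wedgeNorm, wedgeNorm, ← Real.sqrt_sq hc, ← Real.sqrt_mul (sq_nonneg c), mul_div_assoc',
    mul_sum]
  gcongr with i _
  rw [mul_sum]
  gcongr with j _
  by_cases hij : i = j
  · subst hij; simp
  · calc (a i * v i * (a j * w j) - a j * v j * (a i * w i)) ^ 2
        = (a i * a j) ^ 2 * (v i * w j - v j * w i) ^ 2 := by ring
      _ ≤ c ^ 2 * (v i * w j - v j * w i) ^ 2 :=
        mul_le_mul_of_nonneg_right (sq_le_sq.2 ((ha i j hij).trans_eq (abs_of_nonneg hc).symm))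
          (sq_nonneg _)

lemma projDist_mul_le {z : Fin n} (hz : a z ≠ 0) {b : ℝ} (hb : 0 ≤ b)
    (ha : ∀ i j, i ≠ j → |a i * a j| ≤ |a z| * b) {v w : Fin n → ℝ} (hv : v z ≠ 0)
    (hw : w z ≠ 0) :
    projDist n (fun i => a i * v i) (fun i => a i * w i) ≤
      b * eucNorm n v * eucNorm n w / (|a z| * |v z| * |w z|) * projDist n v w := by
  have hv' : eucNorm n v ≠ 0 := (eucNorm_pos fun h => hv (by simp [h])).ne'
  have hw' : eucNorm n w ≠ 0 := (eucNorm_pos fun h => hw (by simp [h])).ne'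
  have hlower : ∀ u : Fin n → ℝ, |a z| * |u z| ≤ eucNorm n (fun i => a i * u i) := fun u =>
    (abs_mul (a z) (u z)).symm.trans_le (abs_le_eucNorm (fun i => a i * u i) z)
  calc projDist n (fun i => a i * v i) (fun i => a i * w i)
      ≤ |a z| * b * wedgeNorm n v w / ((|a z| * |v z|) * (|a z| * |w z|)) := by
        refine div_le_div₀ (mul_nonneg (by positivity) (wedgeNorm_nonneg v w))
          (wedgeNorm_mul_le (by positivity) ha v w) (by positivity)
          (mul_le_mul (hlower v) (hlower w) (by positivity) (eucNorm_nonneg _))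
    _ = b * eucNorm n v * eucNorm n w / (|a z| * |v z| * |w z|) * projDist n v w := by
        rw [projDist]
        field_simp

end DiagonalAction

lemma abs_mul_le_of_antitone {ι : Type*} [LinearOrder ι] {a : ι → ℝ} (hpos : ∀ i, 0 < a i)
    (hmono : Antitone a) {i₀ i₁ : ι} (h₀ : ∀ i, i₀ ≤ i) (h₁ : ∀ i, i₀ < i → i₁ ≤ i) {i j : ι}
    (hij : i ≠ j) : |a i * a j| ≤ |a i₀| * a i₁ := by
  rw [abs_of_pos (mul_pos (hpos i) (hpos j)), abs_of_pos (hpos i₀)]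
  wlog hlt : i < j generalizing i j
  · rw [mul_comm]
    exact this hij.symm (lt_of_le_of_ne (not_lt.1 hlt) hij.symm)
  exact mul_le_mul (hmono (h₀ i)) (hmono (h₁ j ((h₀ i).trans_lt hlt))) (hpos j).le (hpos i₀).le

/-- Let `g = diag(a₁,…,aₙ) ∈ SL_n(ℝ)` with decreasing positive diagonal, and let
`H = [span(e₂,…,eₙ)] = {w : w₁ = 0}`. For `r, ε ∈ (0,1]`, if `a₂/a₁ ≤ ε`, then `[g]` is
`(ε/r²)`-Lipschitz on the set of points of `ℙ^{n-1}(ℝ)` at distance at least `r` from `H`. -/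
theorem stmt12 (n : ℕ) (hn : 2 ≤ n) (a : Fin n → ℝ) (hpos : ∀ i, 0 < a i)
    (hmono : ∀ i j : Fin n, i ≤ j → a j ≤ a i)
    (r ε : ℝ) (hr0 : 0 < r) (hr1 : r ≤ 1)
    (hgap : a ⟨1, by omega⟩ / a ⟨0, by omega⟩ ≤ ε) :
    ∀ v w : Fin n → ℝ, v ≠ 0 → w ≠ 0 →
      r ≤ projDistSet n v {x | x ⟨0, by omega⟩ = 0} →
      r ≤ projDistSet n w {x | x ⟨0, by omega⟩ = 0} →
      projDist n (fun i => a i * v i) (fun i => a i * w i) ≤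
        (ε / r ^ 2) * projDist n v w := by
  intro v w hv hw hrv hrw
  set i₀ : Fin n := ⟨0, by omega⟩
  set i₁ : Fin n := ⟨1, by omega⟩
  have hv₀ : r * eucNorm n v ≤ |v i₀| := mul_eucNorm_le_abs_of_le_projDistSet hv hr1 hrv
  have hw₀ : r * eucNorm n w ≤ |w i₀| := mul_eucNorm_le_abs_of_le_projDistSet hw hr1 hrw
  have hv₀_pos : 0 < |v i₀| := (mul_pos hr0 (eucNorm_pos hv)).trans_le hv₀
  have hw₀_pos : 0 < |w i₀| := (mul_pos hr0 (eucNorm_pos hw)).trans_le hw₀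
  have hpair : ∀ i j, i ≠ j → |a i * a j| ≤ |a i₀| * a i₁ := fun i j =>
    abs_mul_le_of_antitone (i₀ := i₀) (i₁ := i₁) hpos (fun i j h => hmono i j h)
      (fun i => Fin.le_def.2 (Nat.zero_le _)) (fun i hi => Fin.le_def.2 (Fin.lt_def.1 hi))
  have hgap' : a i₁ ≤ ε * |a i₀| := by
    rwa [abs_of_pos (hpos i₀), ← div_le_iff₀ (hpos i₀)]
  have hcoef : a i₁ * eucNorm n v * eucNorm n w / (|a i₀| * |v i₀| * |w i₀|) ≤ ε / r ^ 2 := by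
    have hrw : 0 ≤ r * eucNorm n w := mul_nonneg hr0.le (eucNorm_nonneg w)
    have ha₀_pos : 0 < |a i₀| := abs_pos.2 (hpos i₀).ne'
    rw [div_le_div_iff₀ (by positivity) (by positivity)]
    calc a i₁ * eucNorm n v * eucNorm n w * r ^ 2
        = a i₁ * ((r * eucNorm n v) * (r * eucNorm n w)) := by ring
      _ ≤ ε * |a i₀| * (|v i₀| * |w i₀|) :=
          mul_le_mul hgap' (mul_le_mul hv₀ hw₀ hrw hv₀_pos.le)
            (mul_nonneg (mul_nonneg hr0.le (eucNorm_nonneg v)) hrw) ((hpos i₁).le.trans hgap')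
      _ = ε * (|a i₀| * |v i₀| * |w i₀|) := by ring
  calc projDist n (fun i => a i * v i) (fun i => a i * w i)
      ≤ a i₁ * eucNorm n v * eucNorm n w / (|a i₀| * |v i₀| * |w i₀|) * projDist n v w :=
        projDist_mul_le (hpos i₀).ne' (hpos i₁).le hpair (abs_pos.1 hv₀_pos) (abs_pos.1 hw₀_pos)
    _ ≤ ε / r ^ 2 * projDist n v w := mul_le_mul_of_nonneg_right hcoef (projDist_nonneg v w)
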